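/- arXiv:2406.03803 — 3 statements merged into one kernel-verified Lean document; each statement's English description precedes it below -/
import Mathlib

section
/- Let f₁, f₂, f₃, f₄ be Boolean functions in m variables such that f₁ and f₄ have degree at most r, f₂ and f₃ have degree at most r+1, and f₄ = f₂ + f₃ + h with deg(h) ≤ r. Then the concatenated function g(x₁,…,x_m,x_{m+1},x_{m+2}) = (x_{m+1}+1)(x_{m+2}+1)f₁ + x_{m+1}(x_{m+2}+1)f₂ + (x_{m+1}+1)x_{m+2}f₃ + x_{m+1}x_{m+2}f₄ has degree at most r+2. -/
/-- Boolean functions in `m` variables. -/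
abbrev BF (m : ℕ) := (Fin m → ZMod 2) → ZMod 2

/-- Hamming weight of a Boolean function. -/
def wt {m : ℕ} (f : BF m) : ℕ := (Finset.univ.filter fun x => f x = 1).card

/-- `f` has algebraic degree at most `r`: it is represented by a polynomial of total degree `≤ r`. -/
def degLE {m : ℕ} (f : BF m) (r : ℕ) : Prop :=
  ∃ p : MvPolynomial (Fin m) (ZMod 2), p.totalDegree ≤ r ∧ ∀ x, MvPolynomial.eval x p = f x

/-- The monomial Boolean function with support `I`. -/
def mono {m : ℕ} (I : Finset (Fin m)) : BF m := fun x => ∏ i ∈ I, x i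

/-- Concatenation `f₁‖f₂‖f₃‖f₄` of four `m`-variable functions into an `(m+2)`-variable function. -/
def concat4 {m : ℕ} (f1 f2 f3 f4 : BF m) : BF (m + 2) := fun x =>
  (1 + x ⟨m, by omega⟩) * (1 + x ⟨m + 1, by omega⟩) * f1 (fun i => x (Fin.castLE (by omega) i))
  + x ⟨m, by omega⟩ * (1 + x ⟨m + 1, by omega⟩) * f2 (fun i => x (Fin.castLE (by omega) i))
  + (1 + x ⟨m, by omega⟩) * x ⟨m + 1, by omega⟩ * f3 (fun i => x (Fin.castLE (by omega) i))
  + x ⟨m, by omega⟩ * x ⟨m + 1, by omega⟩ * f4 (fun i => x (Fin.castLE (by omega) i))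

/-- Concatenation `f‖g` of two `m`-variable functions into an `(m+1)`-variable function. -/
def concat2 {m : ℕ} (f g : BF m) : BF (m + 1) := fun x =>
  (1 + x (Fin.last m)) * f (fun i => x i.castSucc) + x (Fin.last m) * g (fun i => x i.castSucc)

lemma key (y z a b c e : ZMod 2) :
    (1+y)*(1+z)*a + y*(1+z)*b + (1+y)*z*c + y*z*(b+c+e)
      = a + y*(a+b) + z*(a+c) + y*z*(a+e) := by revert y z a b c e; decide

theorem stmt0 (m r : ℕ) (f1 f2 f3 f4 h : BF m)
    (h1 : degLE f1 r) (h4 : degLE f4 r)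
    (h2 : degLE f2 (r + 1)) (h3 : degLE f3 (r + 1))
    (hsum : f4 = f2 + f3 + h) (hh : degLE h r) :
    degLE (concat4 f1 f2 f3 f4) (r + 2) := by
  obtain ⟨p1, hp1, he1⟩ := h1
  obtain ⟨p2, hp2, he2⟩ := h2
  obtain ⟨p3, hp3, he3⟩ := h3
  obtain ⟨ph, hph, heh⟩ := hh
  set emb : Fin m → Fin (m+2) := Fin.castLE (by omega) with hemb
  set q1 := MvPolynomial.rename emb p1 with hq1d
  set q2 := MvPolynomial.rename emb p2 with hq2d
  set q3 := MvPolynomial.rename emb p3 with hq3d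
  set qh := MvPolynomial.rename emb ph with hqhd
  set Y : MvPolynomial (Fin (m+2)) (ZMod 2) := MvPolynomial.X ⟨m, by omega⟩ with hY
  set Z : MvPolynomial (Fin (m+2)) (ZMod 2) := MvPolynomial.X ⟨m+1, by omega⟩ with hZ
  have dq1 : q1.totalDegree ≤ r := le_trans (MvPolynomial.totalDegree_rename_le _ _) hp1
  have dq2 : q2.totalDegree ≤ r+1 := le_trans (MvPolynomial.totalDegree_rename_le _ _) hp2
  have dq3 : q3.totalDegree ≤ r+1 := le_trans (MvPolynomial.totalDegree_rename_le _ _) hp3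
  have dqh : qh.totalDegree ≤ r := le_trans (MvPolynomial.totalDegree_rename_le _ _) hph
  refine ⟨q1 + Y*(q1+q2) + Z*(q1+q3) + Y*Z*(q1+qh), ?_, ?_⟩
  · have dY : Y.totalDegree ≤ 1 := le_of_eq (MvPolynomial.totalDegree_X _)
    have dZ : Z.totalDegree ≤ 1 := le_of_eq (MvPolynomial.totalDegree_X _)
    refine le_trans (MvPolynomial.totalDegree_add _ _) (max_le (le_trans (MvPolynomial.totalDegree_add _ _) (max_le (le_trans (MvPolynomial.totalDegree_add _ _) (max_le ?_ ?_)) ?_)) ?_)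
    · omega
    · exact le_trans (MvPolynomial.totalDegree_mul _ _)
        (by have := MvPolynomial.totalDegree_add q1 q2; omega)
    · exact le_trans (MvPolynomial.totalDegree_mul _ _)
        (by have := MvPolynomial.totalDegree_add q1 q3; omega)
    · refine le_trans (MvPolynomial.totalDegree_mul _ _) ?_
      have := MvPolynomial.totalDegree_mul Y Z
      have := MvPolynomial.totalDegree_add q1 qh
      omega
  · intro x
    have ev : ∀ p : MvPolynomial (Fin m) (ZMod 2),
        MvPolynomial.eval x (MvPolynomial.rename emb p) = MvPolynomial.eval (x ∘ emb) p := by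
      intro p; rw [MvPolynomial.eval_rename]
    simp only [map_add, map_mul, hq1d, hq2d, hq3d, hqhd, ev, hY, hZ, MvPolynomial.eval_X]
    have h4v : f4 (x ∘ emb) = f2 (x ∘ emb) + f3 (x ∘ emb) + h (x ∘ emb) := by
      rw [hsum]; rfl
    rw [he1, he2, he3, heh]
    show _ = concat4 f1 f2 f3 f4 x
    unfold concat4
    have hcomp : (fun i => x (Fin.castLE (by omega) i)) = x ∘ emb := rfl
    rw [hcomp, h4v]
    exact (key (x ⟨m, by omega⟩) (x ⟨m+1, by omega⟩) (f1 (x ∘ emb)) (f2 (x ∘ emb)) (f3 (x ∘ emb)) (h (x ∘ emb))).symm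
end

section
/- Let I, J, K be pairwise distinct 5-element subsets of {1,…,10}, with c₁=|I∩J|, c₂=|I∩K|, c₃=|J∩K|, c₄=|I∩J∩K|, and let f₁, f₂, f₃ be the corresponding monomial Boolean functions on F₂^{10}. Then |{x : f₁(x)=1 ∧ f₂(x)=0 ∧ f₃(x)=0}| = 2^{c₁+c₂+c₃−c₄−5} − 2^{c₁} − 2^{c₂} + 32. -/
lemma mono_eq_one_iff {m : ℕ} (S : Finset (Fin m)) (x : Fin m → ZMod 2) :
    mono S x = 1 ↔ ∀ i ∈ S, x i = 1 := by
  constructor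
  · intro h i hi
    by_contra hne
    have h0 : x i = 0 := by
      have : ∀ a : ZMod 2, a ≠ 1 → a = 0 := by decide
      exact this _ hne
    have : mono S x = 0 := Finset.prod_eq_zero hi h0
    rw [this] at h
    exact absurd h (by decide)
  · intro h; exact Finset.prod_eq_one h

lemma zmod_eq_zero_iff (a : ZMod 2) : a = 0 ↔ ¬ a = 1 := by revert a; decide

lemma cardU (S : Finset (Fin 10)) : S.card ≤ 10 := by
  have := Finset.card_le_univ S
  simpa using this

lemma count_all (n : ℕ) (S : Finset (Fin n)) :
    (Finset.univ.filter fun x : Fin n → ZMod 2 => ∀ i ∈ S, x i = 1).card = 2 ^ (n - S.card) := by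
  have heq : (Finset.univ.filter fun x : Fin n → ZMod 2 => ∀ i ∈ S, x i = 1)
      = Fintype.piFinset (fun i => if i ∈ S then ({1} : Finset (ZMod 2)) else Finset.univ) := by
    ext x
    simp only [Finset.mem_filter, Finset.mem_univ, true_and, Fintype.mem_piFinset]
    constructor
    · intro h i
      split <;> simp_all
    · intro h i hi
      have := h i
      simpa [hi] using this
  rw [heq, Fintype.card_piFinset]
  have : ∀ i : Fin n, (if i ∈ S then ({1} : Finset (ZMod 2)) else Finset.univ).card
      = if i ∈ S then 1 else 2 := by
    intro i; split <;> simp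
  simp only [this]
  rw [Finset.prod_ite, Finset.prod_const, Finset.prod_const, one_pow, one_mul]
  congr 1
  rw [Finset.filter_not, Finset.card_sdiff_of_subset (Finset.filter_subset _ _)]
  simp [Finset.filter_mem_eq_inter]

theorem stmt6 (I J K : Finset (Fin 10)) (c1 c2 c3 c4 : ℕ)
    (hI : I.card = 5) (hJ : J.card = 5) (hK : K.card = 5)
    (hIJ : I ≠ J) (hIK : I ≠ K) (hJK : J ≠ K)
    (hc1 : (I ∩ J).card = c1) (hc2 : (I ∩ K).card = c2)
    (hc3 : (J ∩ K).card = c3) (hc4 : (I ∩ J ∩ K).card = c4) :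
    ((Finset.univ.filter fun x : Fin 10 → ZMod 2 =>
        mono I x = 1 ∧ mono J x = 0 ∧ mono K x = 0).card : ℤ)
      = 2 ^ (c1 + c2 + c3 - c4 - 5) - 2 ^ c1 - 2 ^ c2 + 32 := by
  classical
  obtain ⟨A, hA⟩ : ∃ A, A = Finset.univ.filter fun x : Fin 10 → ZMod 2 => ∀ i ∈ I, x i = 1 := ⟨_, rfl⟩
  obtain ⟨B, hB⟩ : ∃ B, B = Finset.univ.filter fun x : Fin 10 → ZMod 2 => ∀ i ∈ J, x i = 1 := ⟨_, rfl⟩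
  obtain ⟨C, hC⟩ : ∃ C, C = Finset.univ.filter fun x : Fin 10 → ZMod 2 => ∀ i ∈ K, x i = 1 := ⟨_, rfl⟩
  -- target set equals A \ (B ∪ C)
  have hTarget : (Finset.univ.filter fun x : Fin 10 → ZMod 2 =>
        mono I x = 1 ∧ mono J x = 0 ∧ mono K x = 0) = A \ (B ∪ C) := by
    ext x
    simp only [hA, hB, hC, Finset.mem_filter, Finset.mem_sdiff, Finset.mem_union,
      Finset.mem_univ, true_and, mono_eq_one_iff, zmod_eq_zero_iff]
    tauto
  have hsub : A \ (B ∪ C) = A \ ((A ∩ B) ∪ (A ∩ C)) := by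
    ext x
    simp only [Finset.mem_sdiff, Finset.mem_union, Finset.mem_inter]
    tauto
  have hss : (A ∩ B) ∪ (A ∩ C) ⊆ A := by
    intro x hx
    simp only [Finset.mem_union, Finset.mem_inter] at hx
    tauto
  have hcard1 : (A \ (B ∪ C)).card = A.card - ((A ∩ B) ∪ (A ∩ C)).card := by
    rw [hsub, Finset.card_sdiff_of_subset hss]
  have hIE := Finset.card_union_add_card_inter (A ∩ B) (A ∩ C)
  have hint : (A ∩ B) ∩ (A ∩ C) = A ∩ B ∩ C := by
    ext x
    simp only [Finset.mem_inter]
    tauto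
  rw [hint] at hIE
  -- counts
  have cA : A.card = 32 := by
    rw [hA]
    have h := count_all 10 I
    rw [hI] at h
    exact h
  have cAB : (A ∩ B).card = 2 ^ c1 := by
    have e : A ∩ B = Finset.univ.filter fun x : Fin 10 → ZMod 2 => ∀ i ∈ I ∪ J, x i = 1 := by
      ext x
      simp only [hA, hB, Finset.mem_inter, Finset.mem_filter, Finset.mem_univ, true_and,
        Finset.mem_union, or_imp, forall_and]
    have he : 10 - (I ∪ J).card = c1 := by
      have := Finset.card_union_add_card_inter I J
      have := cardU (I ∪ J)
      omega
    rw [e]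
    have h := count_all 10 (I ∪ J)
    rw [he] at h
    exact h
  have cAC : (A ∩ C).card = 2 ^ c2 := by
    have e : A ∩ C = Finset.univ.filter fun x : Fin 10 → ZMod 2 => ∀ i ∈ I ∪ K, x i = 1 := by
      ext x
      simp only [hA, hC, Finset.mem_inter, Finset.mem_filter, Finset.mem_univ, true_and,
        Finset.mem_union, or_imp, forall_and]
    have he : 10 - (I ∪ K).card = c2 := by
      have := Finset.card_union_add_card_inter I K
      have := cardU (I ∪ K)
      omega
    rw [e]
    have h := count_all 10 (I ∪ K)
    rw [he] at h
    exact h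
  have cABC : (A ∩ B ∩ C).card = 2 ^ (c1 + c2 + c3 - c4 - 5) := by
    have e : A ∩ B ∩ C = Finset.univ.filter fun x : Fin 10 → ZMod 2 =>
        ∀ i ∈ I ∪ J ∪ K, x i = 1 := by
      ext x
      simp only [hA, hB, hC, Finset.mem_inter, Finset.mem_filter, Finset.mem_univ, true_and,
        Finset.mem_union, or_imp, forall_and]
    have he : 10 - (I ∪ J ∪ K).card = c1 + c2 + c3 - c4 - 5 := by
      have u1 := Finset.card_union_add_card_inter I J
      have u2 := Finset.card_union_add_card_inter (I ∪ J) K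
      have u3 := Finset.card_union_add_card_inter (I ∩ K) (J ∩ K)
      have e1 : (I ∪ J) ∩ K = I ∩ K ∪ J ∩ K := Finset.union_inter_distrib_right ..
      have e2 : (I ∩ K) ∩ (J ∩ K) = I ∩ J ∩ K := by
        ext a; simp only [Finset.mem_inter]; tauto
      rw [e1] at u2
      rw [e2] at u3
      have := cardU (I ∪ J ∪ K)
      omega
    rw [e]
    have h := count_all 10 (I ∪ J ∪ K)
    rw [he] at h
    exact h
  have hle : ((A ∩ B) ∪ (A ∩ C)).card ≤ 32 := by
    rw [← cA]; exact Finset.card_le_card hss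
  rw [hTarget]
  clear hTarget
  have hfin : (A \ (B ∪ C)).card + ((A ∩ B) ∪ (A ∩ C)).card = 32 := by omega
  have hu : ((A ∩ B) ∪ (A ∩ C)).card + 2 ^ (c1 + c2 + c3 - c4 - 5) = 2 ^ c1 + 2 ^ c2 := by
    omega
  have h1 := congrArg (Nat.cast : ℕ → ℤ) hfin
  have h2 := congrArg (Nat.cast : ℕ → ℤ) hu
  push_cast at h1 h2
  linarith
end

section
/- Let g₁ = x₁x₂x₃x₄x₅ + x₁x₂x₃x₆x₇ + x₄x₅x₈x₉x₁₀ and g₂ = x₁x₂x₃x₄x₅ + x₁x₆x₈x₉x₁₀ + x₄x₅x₈x₉x₁₀, both on F₂^{10}. Then wt(g₁) = 74, wt(g₂) = 76, and wt(g₁+g₂) = 56, so the 12-variable concatenation 0‖g₁‖g₂‖(g₁+g₂) has Hamming weight 206. -/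
set_option maxRecDepth 10000


lemma zmod_sum (g : ZMod 2 → ℕ) : ∑ x : ZMod 2, g x = g 0 + g 1 := by
  rw [show (Finset.univ : Finset (ZMod 2)) = {0, 1} from by decide]
  rw [Finset.sum_pair (by decide)]

lemma wt_eq_sum {m : ℕ} (f : BF m) :
    wt f = ∑ x : Fin m → ZMod 2, (if f x = 1 then 1 else 0) := Finset.card_filter _ _

lemma wt_concat4 {m : ℕ} (f1 f2 f3 f4 : BF m) :
    wt (concat4 f1 f2 f3 f4) = wt f1 + wt f2 + wt f3 + wt f4 := by
  classical
  let e : ZMod 2 × ZMod 2 × (Fin m → ZMod 2) ≃ (Fin (m + 2) → ZMod 2) :=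
    (Equiv.prodCongr (Equiv.refl _) (Fin.snocEquiv (fun _ => ZMod 2))).trans
      (Fin.snocEquiv (fun _ => ZMod 2))
  have he : ∀ b a (y : Fin m → ZMod 2), e (b, a, y) = Fin.snoc (Fin.snoc y a) b := by
    intro b a y; rfl
  rw [wt_eq_sum (concat4 f1 f2 f3 f4),
    ← Equiv.sum_comp e (fun x => if concat4 f1 f2 f3 f4 x = 1 then 1 else 0)]
  rw [Fintype.sum_prod_type]
  simp_rw [Fintype.sum_prod_type, he]
  have hv1 : ∀ (y : Fin m → ZMod 2) (a b : ZMod 2),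
      (Fin.snoc (Fin.snoc y a) b : Fin (m + 2) → ZMod 2) ⟨m, by omega⟩ = a := by
    intro y a b
    have h : (⟨m, by omega⟩ : Fin (m + 2)) = (Fin.last m).castSucc := rfl
    rw [h, Fin.snoc_castSucc, Fin.snoc_last]
  have hv2 : ∀ (y : Fin m → ZMod 2) (a b : ZMod 2),
      (Fin.snoc (Fin.snoc y a) b : Fin (m + 2) → ZMod 2) ⟨m + 1, by omega⟩ = b := by
    intro y a b
    have h : (⟨m + 1, by omega⟩ : Fin (m + 2)) = Fin.last (m + 1) := rfl
    rw [h, Fin.snoc_last]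
  have hv3 : ∀ (y : Fin m → ZMod 2) (a b : ZMod 2) (i : Fin m),
      (Fin.snoc (Fin.snoc y a) b : Fin (m + 2) → ZMod 2) (Fin.castLE (by omega) i) = y i := by
    intro y a b i
    have h : (Fin.castLE (by omega : m ≤ m + 2) i) = i.castSucc.castSucc := rfl
    rw [h, Fin.snoc_castSucc, Fin.snoc_castSucc]
  rw [zmod_sum, zmod_sum, zmod_sum]
  simp only [concat4, hv1, hv2, hv3]
  have h2 : (1 + 1 : ZMod 2) = 0 := by decide
  simp only [h2, add_zero, zero_add, mul_one, one_mul, mul_zero, zero_mul]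
  rw [wt_eq_sum f1, wt_eq_sum f2, wt_eq_sum f3, wt_eq_sum f4]
  ring

lemma wt_zero {m : ℕ} : wt (0 : BF m) = 0 := by
  simp [wt]

theorem stmt12 :
    wt (mono ({0, 1, 2, 3, 4} : Finset (Fin 10)) + mono ({0, 1, 2, 5, 6} : Finset (Fin 10)) + mono ({3, 4, 7, 8, 9} : Finset (Fin 10))) = 74 ∧
    wt (mono ({0, 1, 2, 3, 4} : Finset (Fin 10)) + mono ({0, 5, 7, 8, 9} : Finset (Fin 10)) + mono ({3, 4, 7, 8, 9} : Finset (Fin 10))) = 76 ∧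
    wt ((mono ({0, 1, 2, 3, 4} : Finset (Fin 10)) + mono ({0, 1, 2, 5, 6} : Finset (Fin 10)) + mono ({3, 4, 7, 8, 9} : Finset (Fin 10))) + (mono ({0, 1, 2, 3, 4} : Finset (Fin 10)) + mono ({0, 5, 7, 8, 9} : Finset (Fin 10)) + mono ({3, 4, 7, 8, 9} : Finset (Fin 10)))) = 56 ∧
    wt (concat4 0 (mono ({0, 1, 2, 3, 4} : Finset (Fin 10)) + mono ({0, 1, 2, 5, 6} : Finset (Fin 10)) + mono ({3, 4, 7, 8, 9} : Finset (Fin 10))) (mono ({0, 1, 2, 3, 4} : Finset (Fin 10)) + mono ({0, 5, 7, 8, 9} : Finset (Fin 10)) + mono ({3, 4, 7, 8, 9} : Finset (Fin 10))) ((mono ({0, 1, 2, 3, 4} : Finset (Fin 10)) + mono ({0, 1, 2, 5, 6} : Finset (Fin 10)) + mono ({3, 4, 7, 8, 9} : Finset (Fin 10))) + (mono ({0, 1, 2, 3, 4} : Finset (Fin 10)) + mono ({0, 5, 7, 8, 9} : Finset (Fin 10)) + mono ({3, 4, 7, 8, 9} : Finset (Fin 10))))) = 206 := by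
  have h1 : wt (mono ({0, 1, 2, 3, 4} : Finset (Fin 10)) + mono ({0, 1, 2, 5, 6} : Finset (Fin 10)) + mono ({3, 4, 7, 8, 9} : Finset (Fin 10))) = 74 := by decide
  have h2 : wt (mono ({0, 1, 2, 3, 4} : Finset (Fin 10)) + mono ({0, 5, 7, 8, 9} : Finset (Fin 10)) + mono ({3, 4, 7, 8, 9} : Finset (Fin 10))) = 76 := by decide
  have h3 : wt ((mono ({0, 1, 2, 3, 4} : Finset (Fin 10)) + mono ({0, 1, 2, 5, 6} : Finset (Fin 10)) + mono ({3, 4, 7, 8, 9} : Finset (Fin 10))) + (mono ({0, 1, 2, 3, 4} : Finset (Fin 10)) + mono ({0, 5, 7, 8, 9} : Finset (Fin 10)) + mono ({3, 4, 7, 8, 9} : Finset (Fin 10)))) = 56 := by decide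
  refine ⟨h1, h2, h3, ?_⟩
  rw [wt_concat4, wt_zero, h1, h2, h3]
end
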